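/- arXiv:1801.02713 — 2 statements merged into one kernel-verified Lean document; each statement's English description precedes it below -/
import Mathlib

section
/- Let F be a field, let m ≥ 1 be an integer, and let c : ℕ → F be a sequence of inputs (with indices starting at 1). Let S : ℕ → Fin m → F be the circular shift-register state defined by S 0 j = 0 for all j, S k 0 = c k + S (k−1) (m−1) for k ≥ 1, and S k j = S (k−1) (j−1) for k ≥ 1 and 1 ≤ j ≤ m−1. Then for every k ≥ 0 and every register index 0 ≤ j ≤ m−1, S k j = Σ_{i : 1 ≤ i ≤ k, i ≡ k − j (mod m)} c i. -/
/-!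
Register `j` at time `k + 1` holds what register `j - 1` held at time `k`, and this shift
preserves the residue `k - j`; the new input `c (k + 1)` is added only to register `0`, the one
register whose class `k + 1 - j` contains `k + 1`. Induction on `k` then gives the closed form.
-/

open Finset

/-- The circular shift-register state for inputs `c : ℕ → F` (indices starting at 1) and
`m` registers: `S 0 j = 0`, `S k 0 = c k + S (k−1) (m−1)` for `k ≥ 1`, and
`S k j = S (k−1) (j−1)` for `k ≥ 1`, `1 ≤ j ≤ m−1`.  (In `Fin m`, `0 - 1 = m - 1`, so the
single equation below covers both cases.) -/
def shiftState {F : Type*} [Field F] (m : ℕ) [NeZero m] (c : ℕ → F) :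
    ℕ → Fin m → F
  | 0, _ => 0
  | (k + 1), j =>
      if j = 0 then c (k + 1) + shiftState m c k (j - 1)
      else shiftState m c k (j - 1)

theorem Fin.natCast_val_sub {m : ℕ} (a b : Fin m) :
    (((a - b : Fin m) : ℕ) : ZMod m) = (a : ZMod m) - (b : ℕ) := by
  rw [Fin.val_sub, ZMod.natCast_mod, Nat.cast_add, Nat.cast_sub b.is_lt.le, ZMod.natCast_self]
  ring

theorem Fin.natCast_val_one {m : ℕ} [NeZero m] : (((1 : Fin m) : ℕ) : ZMod m) = 1 := by
  rw [Fin.val_one', ZMod.natCast_mod, Nat.cast_one]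

theorem Fin.natCast_val_eq_zero_iff {m : ℕ} [NeZero m] (j : Fin m) :
    ((j : ℕ) : ZMod m) = 0 ↔ j = 0 := by
  rw [← Nat.cast_zero, ZMod.natCast_eq_natCast_iff', Nat.mod_eq_of_lt j.is_lt, Nat.zero_mod,
    Fin.ext_iff, Fin.val_zero]

theorem Finset.sum_filter_Icc_succ_top {M : Type*} [AddCommMonoid M] {a b : ℕ} (hab : a ≤ b + 1)
    (p : ℕ → Prop) [DecidablePred p] (f : ℕ → M) :
    ∑ i ∈ (Icc a (b + 1)).filter p, f i =
      (if p (b + 1) then f (b + 1) else 0) + ∑ i ∈ (Icc a b).filter p, f i := by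
  rw [sum_filter, sum_filter, sum_Icc_succ_top hab, add_comm]

theorem shiftState_succ {F : Type*} [Field F] (m : ℕ) [NeZero m] (c : ℕ → F) (k : ℕ) (j : Fin m) :
    shiftState m c (k + 1) j = (if j = 0 then c (k + 1) else 0) + shiftState m c k (j - 1) := by
  by_cases hj : j = 0 <;> simp [shiftState, hj]

/-- closed form for the circular shift-register state: register `j` at time
`k` holds the sum of all past inputs in the residue class `k − j (mod m)`:
`S k j = Σ_{1 ≤ i ≤ k, i ≡ k − j (mod m)} c i`. -/
theorem shiftState_eq_residue_sum
    {F : Type*} [Field F] (m : ℕ) [NeZero m] (c : ℕ → F) :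
    ∀ (k : ℕ) (j : Fin m),
      shiftState m c k j =
        ∑ i ∈ (Finset.Icc 1 k).filter
            (fun i : ℕ => ((i : ZMod m)) = (k : ZMod m) - (j.val : ZMod m)), c i := by
  intro k
  induction k with
  | zero => simp [shiftState]
  | succ k ih =>
    intro j
    have residue_shift : ((k + 1 : ℕ) : ZMod m) - (j : ℕ) = k - ((j - 1 : Fin m) : ℕ) := by
      rw [Fin.natCast_val_sub, Fin.natCast_val_one]
      push_cast
      ring
    have top_term : ((k + 1 : ℕ) : ZMod m) = (k + 1 : ℕ) - (j : ℕ) ↔ j = 0 := by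
      rw [eq_sub_iff_add_eq, add_eq_left, Fin.natCast_val_eq_zero_iff]
    rw [shiftState_succ, ih, sum_filter_Icc_succ_top (by omega)]
    congr 1
    · simp only [top_term]
    · simp only [residue_shift]
end

section
/- Let F be a finite field, let (Ω, P) be a probability space, let (c_i)_{i ≥ 1} be mutually independent F-valued random variables, let m ≥ 1, and let S be the circular shift-register state computed pathwise from the inputs. Then for every k ≥ 0, the m register contents S k 0, S k 1, …, S k (m−1) are mutually independent random variables; moreover the family (c_{k+1}, S k 0, …, S k (m−1)) is mutually independent. -/
/-!
The register `S k j` is the sum of the inputs `c (i + 1)` over the residue class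
`i + 1 + j ≡ k (mod m)`, `i < k`, and the input `c (k + 1)` lies in none of these classes.
Grouping an independent family into pairwise disjoint blocks yields independent blocks (the joint
law is a product measure, and currying a product measure gives a product of product measures);
sums over the blocks are functions of independent blocks, hence independent.
-/

open MeasureTheory ProbabilityTheory

open Function

namespace ProbabilityTheory

variable {Ω ι : Type*} {mΩ : MeasurableSpace Ω} {P : Measure Ω}

theorem iIndepFun.curry {κ : ι → Type*} {𝓧 : (i : ι) → κ i → Type*}
    {m𝓧 : ∀ i j, MeasurableSpace (𝓧 i j)} {X : (i : ι) → (j : κ i) → Ω → 𝓧 i j}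
    (mX : ∀ i j, Measurable (X i j))
    (h : iIndepFun (fun (p : (i : ι) × κ i) ω ↦ X p.1 p.2 ω) P) :
    iIndepFun (fun i ω j ↦ X i j ω) P := by
  have := h.isProbabilityMeasure
  have (i : ι) (j : κ i) := Measure.isProbabilityMeasure_map (μ := P) (mX i j).aemeasurable
  have hcurry : (fun ω i j ↦ X i j ω) =
      MeasurableEquiv.piCurry 𝓧 ∘ fun ω (p : (i : ι) × κ i) ↦ X p.1 p.2 ω := by
    ext; simp [Sigma.curry]
  rw [iIndepFun_iff_map_fun_eq_infinitePi_map (fun i ↦ by fun_prop), hcurry,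
    ← Measure.map_map (by fun_prop) (by fun_prop), h.map_fun_eq_infinitePi_map (fun p ↦ mX _ _),
    Measure.infinitePi_map_piCurry (fun i j ↦ P.map (X i j))]
  congr with i : 1
  exact ((h.precomp (g := Sigma.mk i) sigma_mk_injective).map_fun_eq_infinitePi_map
    (mX i)).symm

theorem iIndepFun.restrict_of_pairwise_disjoint {κ : Type*} {𝓧 : ι → Type*}
    {m𝓧 : ∀ i, MeasurableSpace (𝓧 i)} {X : (i : ι) → Ω → 𝓧 i}
    (mX : ∀ i, Measurable (X i))
    (h : iIndepFun X P) {s : κ → Set ι} (hs : Pairwise (Disjoint on s)) :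
    iIndepFun (fun j ω (i : s j) ↦ X i ω) P :=
  iIndepFun.curry (fun _ i ↦ mX i)
    (h.precomp (g := fun p : (j : κ) × s j ↦ (p.2 : ι))
      (Subtype.val_injective.comp (Set.sigmaToiUnion_injective s hs)))

theorem iIndepFun.finset_sum_of_pairwise_disjoint {κ β : Type*} [AddCommMonoid β]
    [MeasurableSpace β] [MeasurableAdd₂ β] {X : ι → Ω → β} (mX : ∀ i, Measurable (X i))
    (h : iIndepFun X P) {s : κ → Finset ι} (hs : Pairwise (Disjoint on s)) :
    iIndepFun (fun j ω ↦ ∑ i ∈ s j, X i ω) P := by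
  have hblocks := h.restrict_of_pairwise_disjoint mX (s := fun j ↦ (s j : Set ι))
    fun _ _ hjj' ↦ Finset.disjoint_coe.2 (hs hjj')
  convert hblocks.comp (fun _ x ↦ ∑ i, x i)
    (fun _ ↦ Finset.measurable_sum _ fun i _ ↦ measurable_pi_apply i) with j ω
  exact (Finset.sum_coe_sort (s j) (X · ω)).symm

end ProbabilityTheory

section ShiftRegister

open Fin.NatCast Fin.CommRing

/-- `i ∈ registerInputs m k j` means that the input `c (i + 1)` has been added into register `j`
by time `k`; the casts `ℕ → Fin m` reduce mod `m`. -/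
def registerInputs (m : ℕ) [NeZero m] (k : ℕ) (j : Fin m) : Finset ℕ :=
  (Finset.range k).filter fun i ↦ (i : Fin m) + 1 + j = k

lemma registerInputs_succ (m : ℕ) [NeZero m] (k : ℕ) (j : Fin m) :
    registerInputs m (k + 1) j =
      if j = 0 then insert k (registerInputs m k (j - 1)) else registerInputs m k (j - 1) := by
  have hshift (i : ℕ) :
      (i : Fin m) + 1 + j = ((k + 1 : ℕ) : Fin m) ↔ (i : Fin m) + 1 + (j - 1) = k := by
    push_cast
    constructor <;> intro h <;> linear_combination h
  have hnew : (k : Fin m) + 1 + j = ((k + 1 : ℕ) : Fin m) ↔ j = 0 := by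
    push_cast
    exact add_eq_left
  unfold registerInputs
  rw [Finset.range_add_one, Finset.filter_insert, Finset.filter_congr fun i _ ↦ hshift i]
  simp only [hnew]

lemma notMem_registerInputs_self (m : ℕ) [NeZero m] (k : ℕ) (j : Fin m) :
    k ∉ registerInputs m k j := by
  simp [registerInputs]

lemma pairwise_disjoint_registerInputs (m : ℕ) [NeZero m] (k : ℕ) :
    Pairwise (Disjoint on registerInputs m k) := by
  intro j j' hne
  refine Finset.disjoint_left.2 fun i hi hi' ↦ hne ?_
  simp only [registerInputs, Finset.mem_filter] at hi hi'
  exact add_left_cancel (hi.2.trans hi'.2.symm)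

lemma shiftState_eq_sum_registerInputs {F : Type*} [Field F] (m : ℕ) [NeZero m] (c : ℕ → F)
    (k : ℕ) (j : Fin m) :
    shiftState m c k j = ∑ i ∈ registerInputs m k j, c (i + 1) := by
  induction k generalizing j with
  | zero => simp [shiftState, registerInputs]
  | succ k ih =>
    rw [shiftState, registerInputs_succ, ih]
    split_ifs
    · rw [Finset.sum_insert (notMem_registerInputs_self m k _)]
    · rfl

end ShiftRegister

theorem registers_iIndepFun_general
    {Ω : Type*} [MeasureSpace Ω]
    {F : Type*} [Field F] [Fintype F]
    [MeasurableSpace F] [MeasurableSingletonClass F]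
    (m : ℕ) [NeZero m] (c : ℕ → Ω → F) (hc : ∀ i, Measurable (c i))
    (hindep : iIndepFun
      (fun i : ℕ => c (i + 1)) ℙ)
    (k : ℕ) :
    iIndepFun
        (fun (j : Fin m) (ω : Ω) => shiftState m (fun i => c i ω) k j) ℙ ∧
      iIndepFun
        (fun (o : Option (Fin m)) =>
          o.elim (c (k + 1))
            (fun (j : Fin m) (ω : Ω) => shiftState m (fun i => c i ω) k j)) ℙ := by
  have hdisjoint :
      Pairwise (Disjoint on fun o : Option (Fin m) ↦ o.elim {k} (registerInputs m k)) := by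
    rintro (_ | j) (_ | j') hne
    · exact absurd rfl hne
    · exact Finset.disjoint_singleton_left.2 (notMem_registerInputs_self m k j')
    · exact Finset.disjoint_singleton_right.2 (notMem_registerInputs_self m k j)
    · exact pairwise_disjoint_registerInputs m k (Option.some_injective _ |>.ne_iff.1 hne)
  have hjoint : iIndepFun (fun (o : Option (Fin m)) ↦ o.elim (c (k + 1))
      fun j ω ↦ shiftState m (fun i ↦ c i ω) k j) ℙ := by
    convert hindep.finset_sum_of_pairwise_disjoint (fun i ↦ hc (i + 1)) hdisjoint with o ω
    cases o <;> simp [shiftState_eq_sum_registerInputs]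
  exact ⟨hjoint.precomp (Option.some_injective _), hjoint⟩

/-- for mutually independent inputs `(c_i)_{i ≥ 1}`, at every time `k` the
`m` register contents `S k 0, …, S k (m−1)` are mutually independent; moreover the family
`(c_{k+1}, S k 0, …, S k (m−1))` is mutually independent. -/
theorem registers_iIndepFun
    {Ω : Type*} [MeasureSpace Ω] [IsProbabilityMeasure (ℙ : Measure Ω)]
    {F : Type*} [Field F] [Fintype F]
    [MeasurableSpace F] [MeasurableSingletonClass F]
    (m : ℕ) [NeZero m] (c : ℕ → Ω → F) (hc : ∀ i, Measurable (c i))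
    (hindep : iIndepFun
      (fun i : ℕ => c (i + 1)) ℙ)
    (k : ℕ) :
    iIndepFun
        (fun (j : Fin m) (ω : Ω) => shiftState m (fun i => c i ω) k j) ℙ ∧
      iIndepFun
        (fun (o : Option (Fin m)) =>
          o.elim (c (k + 1))
            (fun (j : Fin m) (ω : Ω) => shiftState m (fun i => c i ω) k j)) ℙ :=
  registers_iIndepFun_general m c hc hindep k
end
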